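/- arXiv:2105.11238 — 3 statements merged into one kernel-verified Lean document; each statement's English description precedes it below -/
import Mathlib

section
/- Let φ₀, φ₁ : [0,∞) → [0,∞) be nondegenerate Orlicz functions and θ ∈ (0,1). Define φ_θ : [0,∞) → [0,∞) by requiring φ_θ⁻¹ = (φ₀⁻¹)^{1-θ} (φ₁⁻¹)^θ (i.e., φ_θ is the inverse of the function t ↦ φ₀⁻¹(t)^{1-θ} φ₁⁻¹(t)^θ). Then φ_θ is an Orlicz function, i.e., it is convex, φ_θ(0) = 0, and lim_{t→∞} φ_θ(t) = ∞. -/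
/-- two-point Hölder / superadditivity of the weighted geometric mean -/
lemma holder2 {θ : ℝ} (hθ0 : 0 < θ) (hθ1 : θ < 1) {x₀ x₁ y₀ y₁ : ℝ}
    (hx₀ : 0 ≤ x₀) (hx₁ : 0 ≤ x₁) (hy₀ : 0 ≤ y₀) (hy₁ : 0 ≤ y₁) :
    x₀ ^ (1 - θ) * x₁ ^ θ + y₀ ^ (1 - θ) * y₁ ^ θ ≤
      (x₀ + y₀) ^ (1 - θ) * (x₁ + y₁) ^ θ := by
  have h1θ : 0 < 1 - θ := by linarith
  rcases eq_or_lt_of_le (add_nonneg hx₀ hy₀) with hS₀ | hS₀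
  · have hx : x₀ = 0 := by linarith
    have hy : y₀ = 0 := by linarith
    simp [hx, hy, Real.zero_rpow h1θ.ne']
  rcases eq_or_lt_of_le (add_nonneg hx₁ hy₁) with hS₁ | hS₁
  · have hx : x₁ = 0 := by linarith
    have hy : y₁ = 0 := by linarith
    simp [hx, hy, Real.zero_rpow hθ0.ne']
  set S₀ := x₀ + y₀ with hS₀def
  set S₁ := x₁ + y₁ with hS₁def
  have hF0 : (0:ℝ) < S₀ ^ (1 - θ) := Real.rpow_pos_of_pos hS₀ _
  have hF1 : (0:ℝ) < S₁ ^ θ := Real.rpow_pos_of_pos hS₁ _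
  have key : ∀ u v : ℝ, 0 ≤ u → 0 ≤ v →
      u ^ (1 - θ) * v ^ θ ≤ S₀ ^ (1 - θ) * S₁ ^ θ * ((1 - θ) * (u / S₀) + θ * (v / S₁)) := by
    intro u v hu hv
    have h1 : u ^ (1 - θ) * v ^ θ
        = S₀ ^ (1 - θ) * S₁ ^ θ * ((u / S₀) ^ (1 - θ) * (v / S₁) ^ θ) := by
      rw [Real.div_rpow hu hS₀.le, Real.div_rpow hv hS₁.le]
      field_simp
    rw [h1]
    have h2 : (u / S₀) ^ (1 - θ) * (v / S₁) ^ θ ≤ (1 - θ) * (u / S₀) + θ * (v / S₁) :=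
      Real.geom_mean_le_arith_mean2_weighted h1θ.le hθ0.le
        (div_nonneg hu hS₀.le) (div_nonneg hv hS₁.le) (by ring)
    exact mul_le_mul_of_nonneg_left h2 (by positivity)
  have hx := key x₀ x₁ hx₀ hx₁
  have hy := key y₀ y₁ hy₀ hy₁
  have hsum : S₀ ^ (1 - θ) * S₁ ^ θ * ((1 - θ) * (x₀ / S₀) + θ * (x₁ / S₁))
      + S₀ ^ (1 - θ) * S₁ ^ θ * ((1 - θ) * (y₀ / S₀) + θ * (y₁ / S₁))
      = S₀ ^ (1 - θ) * S₁ ^ θ := by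
    have : (1 - θ) * (x₀ / S₀) + θ * (x₁ / S₁) + ((1 - θ) * (y₀ / S₀) + θ * (y₁ / S₁)) = 1 := by
      field_simp
      ring
    nlinarith [this, mul_pos hF0 hF1]
  linarith

/-- A convex nonnegative function vanishing at `0` is monotone on `[0,∞)`. -/
lemma convex_orlicz_mono {f : ℝ → ℝ} (hconv : ConvexOn ℝ (Set.Ici 0) f)
    (hzero : f 0 = 0) (hnonneg : ∀ t, 0 ≤ t → 0 ≤ f t) :
    ∀ a b : ℝ, 0 ≤ a → a ≤ b → f a ≤ f b := by
  intro a b ha hab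
  rcases eq_or_lt_of_le (ha.trans hab) with hb | hb
  · have : a = 0 := le_antisymm (hab.trans hb.symm.le) ha
    rw [this, ← hb]
  · have hw : 0 ≤ a / b := div_nonneg ha hb.le
    have hw' : a / b ≤ 1 := div_le_one_of_le₀ hab hb.le
    have := hconv.2 (Set.mem_Ici.2 hb.le) (Set.mem_Ici.2 le_rfl)
      hw (by linarith : (0:ℝ) ≤ 1 - a / b) (by ring)
    simp only [smul_eq_mul, mul_zero, add_zero, hzero] at this
    rw [div_mul_cancel₀ a hb.ne'] at this
    calc f a ≤ a / b * f b := this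
    _ ≤ 1 * f b := mul_le_mul_of_nonneg_right hw' (hnonneg b (ha.trans hab))
    _ = f b := one_mul _

/-- The right inverse of a monotone function is strictly monotone. -/
lemma inv_strict_mono {f finv : ℝ → ℝ}
    (hmono : ∀ a b : ℝ, 0 ≤ a → a ≤ b → f a ≤ f b)
    (hinv_nonneg : ∀ s, 0 ≤ s → 0 ≤ finv s)
    (hright : ∀ s, 0 ≤ s → f (finv s) = s) :
    ∀ s s' : ℝ, 0 ≤ s → s < s' → finv s < finv s' := by
  intro s s' hs hss
  by_contra hle
  push_neg at hle
  have : s' ≤ s := by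
    have := hmono _ _ (hinv_nonneg s' (hs.trans hss.le)) hle
    rwa [hright s hs, hright s' (hs.trans hss.le)] at this
  linarith

/-- If `φ₀, φ₁` are nondegenerate Orlicz functions and `θ ∈ (0,1)`, the
function `φ_θ` determined by `φ_θ⁻¹ = (φ₀⁻¹)^(1-θ) (φ₁⁻¹)^θ` is an Orlicz function. -/
theorem interpolated_orlicz_is_orlicz
    (φ₀ φ₁ φ₀inv φ₁inv φθ : ℝ → ℝ) (θ : ℝ) (hθ : θ ∈ Set.Ioo (0:ℝ) 1)
    -- φ₀ is a nondegenerate Orlicz function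
    (hconv₀ : ConvexOn ℝ (Set.Ici 0) φ₀) (hzero₀ : φ₀ 0 = 0)
    (hnonneg₀ : ∀ t, 0 ≤ t → 0 ≤ φ₀ t)
    (htop₀ : Filter.Tendsto φ₀ Filter.atTop Filter.atTop)
    (hnondeg₀ : ∀ t, 0 < t → 0 < φ₀ t)
    -- φ₁ is a nondegenerate Orlicz function
    (hconv₁ : ConvexOn ℝ (Set.Ici 0) φ₁) (hzero₁ : φ₁ 0 = 0)
    (hnonneg₁ : ∀ t, 0 ≤ t → 0 ≤ φ₁ t)
    (htop₁ : Filter.Tendsto φ₁ Filter.atTop Filter.atTop)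
    (hnondeg₁ : ∀ t, 0 < t → 0 < φ₁ t)
    -- φ₀inv, φ₁inv are the inverses of φ₀, φ₁ restricted to [0,∞)
    (hinv_nonneg₀ : ∀ s, 0 ≤ s → 0 ≤ φ₀inv s)
    (hleft₀ : ∀ t, 0 ≤ t → φ₀inv (φ₀ t) = t)
    (hright₀ : ∀ s, 0 ≤ s → φ₀ (φ₀inv s) = s)
    (hinv_nonneg₁ : ∀ s, 0 ≤ s → 0 ≤ φ₁inv s)
    (hleft₁ : ∀ t, 0 ≤ t → φ₁inv (φ₁ t) = t)
    (hright₁ : ∀ s, 0 ≤ s → φ₁ (φ₁inv s) = s)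
    -- φθ is the inverse of t ↦ φ₀inv(t)^(1-θ) * φ₁inv(t)^θ
    (hθnonneg : ∀ s, 0 ≤ s → 0 ≤ φθ s)
    (hθleft : ∀ t, 0 ≤ t → φθ (φ₀inv t ^ (1 - θ) * φ₁inv t ^ θ) = t)
    (hθright : ∀ s, 0 ≤ s → φ₀inv (φθ s) ^ (1 - θ) * φ₁inv (φθ s) ^ θ = s) :
    ConvexOn ℝ (Set.Ici 0) φθ ∧ φθ 0 = 0 ∧
      Filter.Tendsto φθ Filter.atTop Filter.atTop := by
  obtain ⟨hθ0, hθ1⟩ := hθ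
  have h1θ : 0 < 1 - θ := by linarith
  set ψ : ℝ → ℝ := fun t => φ₀inv t ^ (1 - θ) * φ₁inv t ^ θ with hψ
  have mono₀ := convex_orlicz_mono hconv₀ hzero₀ hnonneg₀
  have mono₁ := convex_orlicz_mono hconv₁ hzero₁ hnonneg₁
  have invsm₀ := inv_strict_mono mono₀ hinv_nonneg₀ hright₀
  have invsm₁ := inv_strict_mono mono₁ hinv_nonneg₁ hright₁
  have invmono₀ : ∀ s s' : ℝ, 0 ≤ s → s ≤ s' → φ₀inv s ≤ φ₀inv s' := by
    intro s s' hs hss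
    rcases eq_or_lt_of_le hss with h | h
    · rw [h]
    · exact (invsm₀ s s' hs h).le
  have inv0₀ : φ₀inv 0 = 0 := by
    have := hleft₀ 0 le_rfl; rwa [hzero₀] at this
  have inv0₁ : φ₁inv 0 = 0 := by
    have := hleft₁ 0 le_rfl; rwa [hzero₁] at this
  -- concavity inequality for the inverses
  have invconc₀ : ∀ s s' a b : ℝ, 0 ≤ s → 0 ≤ s' → 0 ≤ a → 0 ≤ b → a + b = 1 →
      a * φ₀inv s + b * φ₀inv s' ≤ φ₀inv (a * s + b * s') := by
    intro s s' a b hs hs' ha hb hab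
    have h0 : (0:ℝ) ≤ φ₀inv s := hinv_nonneg₀ s hs
    have h0' : (0:ℝ) ≤ φ₀inv s' := hinv_nonneg₀ s' hs'
    have hc : 0 ≤ a * φ₀inv s + b * φ₀inv s' := by positivity
    have h1 : φ₀ (a * φ₀inv s + b * φ₀inv s') ≤ a * s + b * s' := by
      have := hconv₀.2 (Set.mem_Ici.2 h0) (Set.mem_Ici.2 h0') ha hb hab
      simp only [smul_eq_mul] at this
      rwa [hright₀ s hs, hright₀ s' hs'] at this
    have h2 : 0 ≤ φ₀ (a * φ₀inv s + b * φ₀inv s') := hnonneg₀ _ hc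
    have h3 := invmono₀ _ _ h2 h1
    rwa [hleft₀ _ hc] at h3
  have invmono₁ : ∀ s s' : ℝ, 0 ≤ s → s ≤ s' → φ₁inv s ≤ φ₁inv s' := by
    intro s s' hs hss
    rcases eq_or_lt_of_le hss with h | h
    · rw [h]
    · exact (invsm₁ s s' hs h).le
  have invconc₁ : ∀ s s' a b : ℝ, 0 ≤ s → 0 ≤ s' → 0 ≤ a → 0 ≤ b → a + b = 1 →
      a * φ₁inv s + b * φ₁inv s' ≤ φ₁inv (a * s + b * s') := by
    intro s s' a b hs hs' ha hb hab
    have h0 : (0:ℝ) ≤ φ₁inv s := hinv_nonneg₁ s hs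
    have h0' : (0:ℝ) ≤ φ₁inv s' := hinv_nonneg₁ s' hs'
    have hc : 0 ≤ a * φ₁inv s + b * φ₁inv s' := by positivity
    have h1 : φ₁ (a * φ₁inv s + b * φ₁inv s') ≤ a * s + b * s' := by
      have := hconv₁.2 (Set.mem_Ici.2 h0) (Set.mem_Ici.2 h0') ha hb hab
      simp only [smul_eq_mul] at this
      rwa [hright₁ s hs, hright₁ s' hs'] at this
    have h2 : 0 ≤ φ₁ (a * φ₁inv s + b * φ₁inv s') := hnonneg₁ _ hc
    have h3 := invmono₁ _ _ h2 h1
    rwa [hleft₁ _ hc] at h3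
  -- properties of ψ
  have ψnonneg : ∀ s : ℝ, 0 ≤ s → 0 ≤ ψ s := by
    intro s hs
    exact mul_nonneg (Real.rpow_nonneg (hinv_nonneg₀ s hs) _)
      (Real.rpow_nonneg (hinv_nonneg₁ s hs) _)
  have ψsm : ∀ s s' : ℝ, 0 ≤ s → s < s' → ψ s < ψ s' := by
    intro s s' hs hss
    have ha := invsm₀ s s' hs hss
    have hb := invsm₁ s s' hs hss
    have h0 := hinv_nonneg₀ s hs
    have h1 := hinv_nonneg₁ s hs
    exact mul_lt_mul'' (Real.rpow_lt_rpow h0 ha h1θ) (Real.rpow_lt_rpow h1 hb hθ0)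
      (Real.rpow_nonneg h0 _) (Real.rpow_nonneg h1 _)
  -- pulling scalars out of the geometric mean
  have hmul : ∀ c A B : ℝ, 0 ≤ c → 0 ≤ A → 0 ≤ B →
      (c * A) ^ (1 - θ) * (c * B) ^ θ = c * (A ^ (1 - θ) * B ^ θ) := by
    intro c A B hc hA hB
    rw [Real.mul_rpow hc hA, Real.mul_rpow hc hB]
    have hcc : c ^ (1 - θ) * c ^ θ = c := by
      rw [← Real.rpow_add' hc (by norm_num : (1 - θ) + θ ≠ 0)]
      norm_num
    calc c ^ (1 - θ) * A ^ (1 - θ) * (c ^ θ * B ^ θ)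
        = (c ^ (1 - θ) * c ^ θ) * (A ^ (1 - θ) * B ^ θ) := by ring
      _ = c * (A ^ (1 - θ) * B ^ θ) := by rw [hcc]
  -- concavity inequality for ψ
  have ψconc : ∀ s s' a b : ℝ, 0 ≤ s → 0 ≤ s' → 0 ≤ a → 0 ≤ b → a + b = 1 →
      a * ψ s + b * ψ s' ≤ ψ (a * s + b * s') := by
    intro s s' a b hs hs' ha hb hab
    have h00 := hinv_nonneg₀ s hs
    have h01 := hinv_nonneg₁ s hs
    have h10 := hinv_nonneg₀ s' hs'
    have h11 := hinv_nonneg₁ s' hs'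
    have hcomb : 0 ≤ a * s + b * s' := by positivity
    have step1 : a * ψ s + b * ψ s' ≤
        (a * φ₀inv s + b * φ₀inv s') ^ (1 - θ) * (a * φ₁inv s + b * φ₁inv s') ^ θ := by
      have h := holder2 hθ0 hθ1 (mul_nonneg ha h00) (mul_nonneg ha h01)
        (mul_nonneg hb h10) (mul_nonneg hb h11)
      rwa [hmul a _ _ ha h00 h01, hmul b _ _ hb h10 h11] at h
    have step2 : (a * φ₀inv s + b * φ₀inv s') ^ (1 - θ) * (a * φ₁inv s + b * φ₁inv s') ^ θ ≤
        ψ (a * s + b * s') := by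
      have nn0 : 0 ≤ a * φ₀inv s + b * φ₀inv s' := by positivity
      have nn1 : 0 ≤ a * φ₁inv s + b * φ₁inv s' := by positivity
      have e0 : (a * φ₀inv s + b * φ₀inv s') ^ (1 - θ) ≤ φ₀inv (a * s + b * s') ^ (1 - θ) :=
        Real.rpow_le_rpow nn0 (invconc₀ s s' a b hs hs' ha hb hab) h1θ.le
      have e1 : (a * φ₁inv s + b * φ₁inv s') ^ θ ≤ φ₁inv (a * s + b * s') ^ θ :=
        Real.rpow_le_rpow nn1 (invconc₁ s s' a b hs hs' ha hb hab) hθ0.le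
      exact mul_le_mul e0 e1 (Real.rpow_nonneg nn1 _)
        (Real.rpow_nonneg (hinv_nonneg₀ _ hcomb) _)
    exact step1.trans step2
  -- now the three conclusions
  refine ⟨⟨convex_Ici 0, ?_⟩, ?_, ?_⟩
  · intro x hx y hy a b ha hb hab
    simp only [smul_eq_mul]
    have hx0 : (0:ℝ) ≤ x := hx
    have hy0 : (0:ℝ) ≤ y := hy
    have hu : 0 ≤ φθ x := hθnonneg x hx0
    have hv : 0 ≤ φθ y := hθnonneg y hy0
    have hc : 0 ≤ a * φθ x + b * φθ y := by positivity
    have hz : 0 ≤ a * x + b * y := by positivity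
    have key : ψ (φθ (a * x + b * y)) ≤ ψ (a * φθ x + b * φθ y) := by
      have e : ψ (φθ (a * x + b * y)) = a * x + b * y := hθright _ hz
      have e0 : ψ (φθ x) = x := hθright x hx0
      have e1 : ψ (φθ y) = y := hθright y hy0
      have := ψconc (φθ x) (φθ y) a b hu hv ha hb hab
      rw [e0, e1] at this
      rw [e]
      exact this
    by_contra hlt
    push_neg at hlt
    have := ψsm _ _ hc hlt
    linarith
  · have h := hθleft 0 le_rfl
    rwa [inv0₀, inv0₁, Real.zero_rpow h1θ.ne', Real.zero_rpow hθ0.ne', mul_zero] at h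
  · rw [Filter.tendsto_atTop_atTop]
    intro c
    refine ⟨ψ (max c 0), fun s hs => ?_⟩
    have hmc : (0:ℝ) ≤ max c 0 := le_max_right _ _
    have hψc : 0 ≤ ψ (max c 0) := ψnonneg _ hmc
    have hs0 : (0:ℝ) ≤ s := hψc.trans hs
    have : max c 0 ≤ φθ s := by
      by_contra hlt
      push_neg at hlt
      have h2 := ψsm _ _ (hθnonneg s hs0) hlt
      have h3 : ψ (φθ s) = s := hθright s hs0
      rw [h3] at h2
      linarith
    exact (le_max_left c 0).trans this
end

section
/- Let Y be a real Banach space and Y ⊕_ℂ Y its complexification with the norm ‖(x,y)‖ = sup_{θ∈[0,2π]} ‖cos(θ)x + sin(θ)y‖. If X is a real Banach space containing Y such that every bounded linear operator T : Y → C[0,1] extends to a bounded operator on X (the C[0,1]-extension property), then every bounded ℂ-linear operator T : Y ⊕_ℂ Y → C([0,1], ℂ) extends to a bounded ℂ-linear operator on X ⊕_ℂ X. -/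
open Complex

variable {E : Type*} [NormedAddCommGroup E] [NormedSpace ℝ E]

/-- The complexification norm `‖(x,y)‖ = sup_{θ∈[0,2π]} ‖cos θ · x + sin θ · y‖`. -/
noncomputable def complexificationNorm (p : E × E) : ℝ :=
  sSup ((fun θ : ℝ => ‖Real.cos θ • p.1 + Real.sin θ • p.2‖) '' Set.Icc 0 (2 * Real.pi))

/-- Multiplication by `i` on the complexification `E ⊕_ℂ E`. -/
def complexificationJ : E × E →ₗ[ℝ] E × E where
  toFun p := (-p.2, p.1)
  map_add' p q := by simp [Prod.ext_iff]; abel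
  map_smul' c p := by simp [Prod.ext_iff]

/-! A real-linear `T` on `Y × Y` commuting with the complex structure is determined by
`A = T (·, 0)` through `T (x, y) = A x + i • A y`, and `A` is bounded because `(x, 0)` has
complexification norm `‖x‖`. Extending the real and imaginary parts of `A` separately extends `A`
to some `B` on `X`, and `(x, y) ↦ B x + i • B y` is a ℂ-linear extension of `T`, bounded by `2‖B‖`
since `‖x‖` and `‖y‖` are both dominated by the complexification norm of `(x, y)`. -/

section ComplexificationNorm

variable {X : Type*} [NormedAddCommGroup X] [NormedSpace ℝ X]

lemma bddAbove_complexificationNorm_image (p : X × X) :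
    BddAbove ((fun θ : ℝ => ‖Real.cos θ • p.1 + Real.sin θ • p.2‖) '' Set.Icc 0 (2 * Real.pi)) := by
  refine ⟨‖p.1‖ + ‖p.2‖, ?_⟩
  rintro r ⟨θ, -, rfl⟩
  calc ‖Real.cos θ • p.1 + Real.sin θ • p.2‖ ≤ ‖Real.cos θ • p.1‖ + ‖Real.sin θ • p.2‖ :=
        norm_add_le _ _
    _ ≤ ‖p.1‖ + ‖p.2‖ := by
        gcongr <;> rw [norm_smul, Real.norm_eq_abs]
        · exact mul_le_of_le_one_left (norm_nonneg _) (Real.abs_cos_le_one θ)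
        · exact mul_le_of_le_one_left (norm_nonneg _) (Real.abs_sin_le_one θ)

lemma norm_fst_le_complexificationNorm (p : X × X) : ‖p.1‖ ≤ complexificationNorm p :=
  le_csSup (bddAbove_complexificationNorm_image p) ⟨0, ⟨le_rfl, by positivity⟩, by simp⟩

lemma norm_snd_le_complexificationNorm (p : X × X) : ‖p.2‖ ≤ complexificationNorm p :=
  le_csSup (bddAbove_complexificationNorm_image p)
    ⟨Real.pi / 2, ⟨by positivity, by linarith [Real.pi_pos]⟩, by simp⟩

lemma complexificationNorm_inl (x : X) : complexificationNorm (x, (0 : X)) = ‖x‖ := by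
  refine le_antisymm (csSup_le ((Set.nonempty_Icc.mpr (by positivity)).image _) ?_)
    (norm_fst_le_complexificationNorm (x, 0))
  rintro r ⟨θ, -, rfl⟩
  simp only [smul_zero, add_zero, norm_smul, Real.norm_eq_abs]
  exact mul_le_of_le_one_left (norm_nonneg _) (Real.abs_cos_le_one θ)

end ComplexificationNorm

section Complexify

variable {X F : Type*} [NormedAddCommGroup X] [NormedSpace ℝ X] [AddCommGroup F] [Module ℂ F]

def LinearMap.complexify (B : X →ₗ[ℝ] F) : X × X →ₗ[ℝ] F :=
  B.coprod (Complex.I • B)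

lemma LinearMap.complexify_apply (B : X →ₗ[ℝ] F) (p : X × X) :
    B.complexify p = B p.1 + Complex.I • B p.2 :=
  rfl

lemma LinearMap.complexify_complexificationJ (B : X →ₗ[ℝ] F) (p : X × X) :
    B.complexify (complexificationJ p) = Complex.I • B.complexify p := by
  simp only [complexify_apply, complexificationJ, LinearMap.coe_mk, AddHom.coe_mk, map_neg,
    smul_add, smul_smul, Complex.I_mul_I, neg_one_smul]
  abel

lemma LinearMap.complexify_comp_inl (T : X × X →ₗ[ℝ] F)
    (hT : ∀ p, T (complexificationJ p) = Complex.I • T p) :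
    (T ∘ₗ LinearMap.inl ℝ X X).complexify = T := by
  refine LinearMap.ext fun p => ?_
  have hJ : complexificationJ (p.2, (0 : X)) = (0, p.2) := by simp [complexificationJ]
  rw [complexify_apply, LinearMap.comp_apply, LinearMap.comp_apply, LinearMap.inl_apply,
    LinearMap.inl_apply, ← hT, hJ, ← map_add, Prod.mk_add_mk, add_zero, zero_add]

end Complexify

lemma ContinuousLinearMap.norm_complexify_le {X F : Type*} [NormedAddCommGroup X]
    [NormedSpace ℝ X] [NormedAddCommGroup F] [NormedSpace ℂ F] (B : X →L[ℝ] F) (p : X × X) :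
    ‖(B : X →ₗ[ℝ] F).complexify p‖ ≤ 2 * ‖B‖ * complexificationNorm p := by
  have h₁ := B.le_opNorm_of_le (norm_fst_le_complexificationNorm p)
  have h₂ := B.le_opNorm_of_le (norm_snd_le_complexificationNorm p)
  calc ‖(B : X →ₗ[ℝ] F).complexify p‖ ≤ ‖B p.1‖ + ‖Complex.I • B p.2‖ := norm_add_le _ _
    _ ≤ 2 * ‖B‖ * complexificationNorm p := by
      rw [norm_smul, Complex.norm_I, one_mul]
      linarith

lemma exists_extension_complexValued {Y X K : Type*} [NormedAddCommGroup Y] [NormedSpace ℝ Y]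
    [NormedAddCommGroup X] [NormedSpace ℝ X] [TopologicalSpace K] [CompactSpace K] (ι : Y → X)
    (hext : ∀ T : Y →L[ℝ] C(K, ℝ), ∃ S : X →L[ℝ] C(K, ℝ), ∀ y, S (ι y) = T y)
    (A : Y →L[ℝ] C(K, ℂ)) : ∃ B : X →L[ℝ] C(K, ℂ), ∀ y, B (ι y) = A y := by
  let ofReal : C(K, ℝ) →L[ℝ] C(K, ℂ) := Complex.ofRealCLM.compLeftContinuous ℝ K
  obtain ⟨Bre, hBre⟩ := hext (Complex.reCLM.compLeftContinuous ℝ K ∘L A)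
  obtain ⟨Bim, hBim⟩ := hext (Complex.imCLM.compLeftContinuous ℝ K ∘L A)
  refine ⟨ofReal ∘L Bre + Complex.I • (ofReal ∘L Bim), fun y => ?_⟩
  ext t
  simp [ofReal, hBre, hBim, mul_comm Complex.I]

theorem complexification_extension_property_general
    (Y X : Type*)
    [NormedAddCommGroup Y] [NormedSpace ℝ Y]
    [NormedAddCommGroup X] [NormedSpace ℝ X]
    (ι : Y →ₗᵢ[ℝ] X)  -- Y is a subspace of X
    -- (Y, X) has the C[0,1]-extension property
    (hext : ∀ T : Y →L[ℝ] C(Set.Icc (0:ℝ) 1, ℝ),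
      ∃ S : X →L[ℝ] C(Set.Icc (0:ℝ) 1, ℝ), ∀ y : Y, S (ι y) = T y)
    -- T is a bounded ℂ-linear operator on the complexification Y ⊕_ℂ Y
    (T : Y × Y →ₗ[ℝ] C(Set.Icc (0:ℝ) 1, ℂ))
    (hTc : ∀ p : Y × Y, T (complexificationJ p) = Complex.I • T p)
    (hTbdd : ∃ c : ℝ, ∀ p : Y × Y, ‖T p‖ ≤ c * complexificationNorm p) :
    -- T extends to a bounded ℂ-linear operator on X ⊕_ℂ X
    ∃ S : X × X →ₗ[ℝ] C(Set.Icc (0:ℝ) 1, ℂ),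
      (∀ p : X × X, S (complexificationJ p) = Complex.I • S p) ∧
      (∃ c : ℝ, ∀ p : X × X, ‖S p‖ ≤ c * complexificationNorm p) ∧
      (∀ p : Y × Y, S (ι p.1, ι p.2) = T p) := by
  obtain ⟨c, hc⟩ := hTbdd
  let A : Y →L[ℝ] C(Set.Icc (0:ℝ) 1, ℂ) := (T ∘ₗ LinearMap.inl ℝ Y Y).mkContinuous c
    fun y => by simpa [complexificationNorm_inl] using hc (y, 0)
  obtain ⟨B, hB⟩ := exists_extension_complexValued ι hext A
  refine ⟨(B : X →ₗ[ℝ] C(Set.Icc (0:ℝ) 1, ℂ)).complexify,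
    LinearMap.complexify_complexificationJ _, ⟨2 * ‖B‖, B.norm_complexify_le⟩, fun p => ?_⟩
  rw [LinearMap.complexify_apply, ContinuousLinearMap.coe_coe, hB, hB]
  exact LinearMap.congr_fun (T.complexify_comp_inl hTc) p

/-- if `(Y, X)` has the `C[0,1]`-extension property, then the
complexifications have the `C([0,1], ℂ)`-extension property. -/
theorem complexification_extension_property
    (Y X : Type*)
    [NormedAddCommGroup Y] [NormedSpace ℝ Y] [CompleteSpace Y]
    [NormedAddCommGroup X] [NormedSpace ℝ X] [CompleteSpace X]
    (ι : Y →ₗᵢ[ℝ] X)  -- Y is a subspace of X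
    -- (Y, X) has the C[0,1]-extension property
    (hext : ∀ T : Y →L[ℝ] C(Set.Icc (0:ℝ) 1, ℝ),
      ∃ S : X →L[ℝ] C(Set.Icc (0:ℝ) 1, ℝ), ∀ y : Y, S (ι y) = T y)
    -- T is a bounded ℂ-linear operator on the complexification Y ⊕_ℂ Y
    (T : Y × Y →ₗ[ℝ] C(Set.Icc (0:ℝ) 1, ℂ))
    (hTc : ∀ p : Y × Y, T (complexificationJ p) = Complex.I • T p)
    (hTbdd : ∃ c : ℝ, ∀ p : Y × Y, ‖T p‖ ≤ c * complexificationNorm p) :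
    -- T extends to a bounded ℂ-linear operator on X ⊕_ℂ X
    ∃ S : X × X →ₗ[ℝ] C(Set.Icc (0:ℝ) 1, ℂ),
      (∀ p : X × X, S (complexificationJ p) = Complex.I • S p) ∧
      (∃ c : ℝ, ∀ p : X × X, ‖S p‖ ≤ c * complexificationNorm p) ∧
      (∀ p : Y × Y, S (ι p.1, ι p.2) = T p) :=
  complexification_extension_property_general Y X ι hext T hTc hTbdd
end

section
/- Let φ₀, φ₁ be nondegenerate Orlicz functions in Δ₂, θ ∈ (0,1), and φ_θ⁻¹ = (φ₀⁻¹)^{1−θ}(φ₁⁻¹)^θ. Define g_x(z) = φ₀⁻¹(φ_θ(|x|))^{1−z} φ₁⁻¹(φ_θ(|x|))^z sgn(x) for x ∈ ℂ. Then there exist constants α, β > 0 such that for all x, y ∈ ℂ and t ∈ [0,1]: φ_θ(|t·g_x'(θ) + (1−t)·g_y'(θ) − g_{tx+(1−t)y}'(θ)|) ≤ β·(t·φ_θ(|x|) + (1−t)·φ_θ(|y|)). In particular, the function (x₁, x₀) ↦ φ_θ(x₀) + φ_θ(x₁ − g_{x₀}'(θ)) is quasi-convex on ℂ², i.e., is a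 quasi-Young function. -/
/-!
`φ_θ` is the inverse of `ρ = (φ₀⁻¹)^(1-θ) (φ₁⁻¹)^θ`. The inverses `φᵢ⁻¹` are concave and
satisfy `2 φᵢ⁻¹(r) ≤ φᵢ⁻¹(M r)`; since the weighted geometric mean is concave, monotone and
superadditive, `ρ` inherits both properties, so `φ_θ` is a convex Orlicz function in `Δ₂`.

For the deviation from linearity, the entire function
`N = t g_x + (1 - t) g_y - g_{tx+(1-t)y}` vanishes at `θ`, because `g_x(θ) = x`, and
`N'(θ)` is the deviation. The three lines theorem applied to `N(z)/(z - θ)` bounds it by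
`(S₀/θ)^(1-θ) (S₁/(1-θ))^θ`, where `Sᵢ` sums the boundary moduli `φᵢ⁻¹(φ_θ|·|)`.
Concavity of `φᵢ⁻¹` gives `Sᵢ ≤ 2 φᵢ⁻¹(s)` with `s = t φ_θ|x| + (1-t) φ_θ|y|`, so the
deviation is at most a constant times `ρ(s)`, and `Δ₂` turns this into `φ_θ(…) ≤ β s`.
Quasi-convexity of `Ψ` then follows from convexity and the `Δ₂` quasi-triangle inequality.
-/

open Complex

noncomputable def csgn (x : ℂ) : ℂ := if x = 0 then 0 else x / (‖x‖ : ℂ)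

open Set

theorem MonotoneOn.of_rightInvOn {α β : Type*} [LinearOrder α] [LinearOrder β] {f : α → β}
    {g : β → α} {s : Set α} {t : Set β} (hf : MonotoneOn f s) (hg : MapsTo g t s)
    (h : RightInvOn g f t) : MonotoneOn g t := by
  intro x hx y hy hxy
  by_contra! hlt
  have hyx : y ≤ x := by simpa only [h hx, h hy] using hf (hg hy) (hg hx) hlt.le
  exact hlt.ne (by rw [le_antisymm hxy hyx])

theorem ConvexOn.monotoneOn_of_isMinOn {f : ℝ → ℝ} {a : ℝ} (hf : ConvexOn ℝ (Ici a) f)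
    (hmin : IsMinOn f (Ici a) a) : MonotoneOn f (Ici a) := by
  intro u hu v hv huv
  rcases huv.lt_or_eq with huv | rfl
  · rcases (mem_Ici.mp hu).lt_or_eq with hau | rfl
    · refine hf.le_right_of_left_le self_mem_Ici hv ?_ (hmin hu)
      rw [openSegment_eq_Ioo (hau.trans huv)]
      exact ⟨hau, huv⟩
    · exact hmin hv
  · exact le_rfl

theorem ConvexOn.comp_norm {E : Type*} [SeminormedAddCommGroup E] [NormedSpace ℝ E]
    {ψ : ℝ → ℝ} (hψ : ConvexOn ℝ (Ici 0) ψ) (hmono : MonotoneOn ψ (Ici 0)) :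
    ConvexOn ℝ univ (fun x : E => ψ ‖x‖) := by
  refine ⟨convex_univ, fun x _ y _ a b ha hb hab => ?_⟩
  have hnorm : ‖a • x + b • y‖ ≤ a • ‖x‖ + b • ‖y‖ :=
    (convexOn_norm convex_univ).2 (mem_univ x) (mem_univ y) ha hb hab
  exact (hmono (norm_nonneg _) (mem_Ici.2 (by simp only [smul_eq_mul]; positivity)) hnorm).trans
    (hψ.2 (norm_nonneg x) (norm_nonneg y) ha hb hab)

structure IsIncreasingInvPair (f g : ℝ → ℝ) : Prop where
  monotoneOn : MonotoneOn f (Ici 0)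
  mapsTo : MapsTo f (Ici 0) (Ici 0)
  mapsTo_inv : MapsTo g (Ici 0) (Ici 0)
  invOn : InvOn g f (Ici 0) (Ici 0)

namespace IsIncreasingInvPair

variable {f g : ℝ → ℝ} {a b : ℝ}

theorem monotoneOn_inv (h : IsIncreasingInvPair f g) : MonotoneOn g (Ici 0) :=
  h.monotoneOn.of_rightInvOn h.mapsTo_inv h.invOn.2

theorem le_inv_iff (h : IsIncreasingInvPair f g) (ha : 0 ≤ a) (hb : 0 ≤ b) :
    a ≤ g b ↔ f a ≤ b := by
  constructor
  · intro hab
    simpa only [h.invOn.2 hb] using h.monotoneOn ha (h.mapsTo_inv hb) hab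
  · intro hab
    simpa only [h.invOn.1 ha] using h.monotoneOn_inv (h.mapsTo ha) hb hab

theorem inv_le_iff (h : IsIncreasingInvPair f g) (ha : 0 ≤ a) (hb : 0 ≤ b) :
    g b ≤ a ↔ b ≤ f a := by
  constructor
  · intro hba
    simpa only [h.invOn.2 hb] using h.monotoneOn (h.mapsTo_inv hb) ha hba
  · intro hba
    simpa only [h.invOn.1 ha] using h.monotoneOn_inv hb (h.mapsTo ha) hba

theorem concaveOn_inv (h : IsIncreasingInvPair f g) (hf : ConvexOn ℝ (Ici 0) f) :
    ConcaveOn ℝ (Ici 0) g := by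
  refine ⟨convex_Ici 0, fun u hu v hv s r hs hr hsr => ?_⟩
  have hgu := h.mapsTo_inv hu
  have hgv := h.mapsTo_inv hv
  rw [h.le_inv_iff ((convex_Ici 0) hgu hgv hs hr hsr) ((convex_Ici 0) hu hv hs hr hsr)]
  simpa only [h.invOn.2 hu, h.invOn.2 hv] using hf.2 hgu hgv hs hr hsr

theorem convexOn_inv (h : IsIncreasingInvPair f g) (hf : ConcaveOn ℝ (Ici 0) f) :
    ConvexOn ℝ (Ici 0) g := by
  refine ⟨convex_Ici 0, fun u hu v hv s r hs hr hsr => ?_⟩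
  have hgu := h.mapsTo_inv hu
  have hgv := h.mapsTo_inv hv
  rw [h.inv_le_iff ((convex_Ici 0) hgu hgv hs hr hsr) ((convex_Ici 0) hu hv hs hr hsr)]
  simpa only [h.invOn.2 hu, h.invOn.2 hv] using hf.2 hgu hgv hs hr hsr

theorem two_mul_inv_le_inv_mul (h : IsIncreasingInvPair f g) {M : ℝ} (hM : 0 ≤ M)
    (hΔ : ∀ t, 0 ≤ t → f (2 * t) ≤ M * f t) {r : ℝ} (hr : 0 ≤ r) : 2 * g r ≤ g (M * r) := by
  have hgr : 0 ≤ g r := h.mapsTo_inv hr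
  rw [h.le_inv_iff (by positivity) (by positivity)]
  simpa only [h.invOn.2 hr] using hΔ _ hgr

theorem inv_two_mul_le_mul_inv (h : IsIncreasingInvPair f g) {M : ℝ} (hM : 0 ≤ M)
    (hΔ : ∀ r, 0 ≤ r → 2 * f r ≤ f (M * r)) {s : ℝ} (hs : 0 ≤ s) : g (2 * s) ≤ M * g s := by
  have hgs : 0 ≤ g s := h.mapsTo_inv hs
  rw [h.inv_le_iff (by positivity) (by positivity)]
  simpa only [h.invOn.2 hs] using hΔ _ hgs

end IsIncreasingInvPair

section Doubling

variable {ψ : ℝ → ℝ} {M : ℝ}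

theorem exists_le_mul_of_doubling (hψ : MonotoneOn ψ (Ici 0)) (hM : 0 < M)
    (hΔ : ∀ s, 0 ≤ s → ψ (2 * s) ≤ M * ψ s) {c : ℝ} (hc : 0 ≤ c) :
    ∃ C > 0, ∀ s, 0 ≤ s → ψ (c * s) ≤ C * ψ s := by
  have hpow : ∀ k : ℕ, ∀ s, 0 ≤ s → ψ (2 ^ k * s) ≤ M ^ k * ψ s := by
    intro k
    induction k with
    | zero => simp
    | succ k ih =>
      intro s hs
      calc ψ (2 ^ (k + 1) * s) = ψ (2 ^ k * (2 * s)) := by ring_nf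
        _ ≤ M ^ k * ψ (2 * s) := ih _ (by positivity)
        _ ≤ M ^ k * (M * ψ s) := mul_le_mul_of_nonneg_left (hΔ s hs) (by positivity)
        _ = M ^ (k + 1) * ψ s := by ring
  obtain ⟨n, hn⟩ := pow_unbounded_of_one_lt c one_lt_two
  refine ⟨M ^ n, pow_pos hM n, fun s hs => ?_⟩
  exact (hψ (mem_Ici.2 (by positivity)) (mem_Ici.2 (by positivity))
    (mul_le_mul_of_nonneg_right hn.le hs)).trans (hpow n s hs)

theorem le_mul_add_of_doubling (hψ : MonotoneOn ψ (Ici 0)) (hψ0 : MapsTo ψ (Ici 0) (Ici 0))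
    (hM : 0 ≤ M) (hΔ : ∀ s, 0 ≤ s → ψ (2 * s) ≤ M * ψ s) {a b : ℝ} (ha : 0 ≤ a) (hb : 0 ≤ b) :
    ψ (a + b) ≤ M * (ψ a + ψ b) := by
  have hmax : 0 ≤ max a b := le_max_of_le_left ha
  calc ψ (a + b) ≤ ψ (2 * max a b) :=
        hψ (mem_Ici.2 (by positivity)) (mem_Ici.2 (by positivity))
          (by linarith [le_max_left a b, le_max_right a b])
    _ ≤ M * ψ (max a b) := hΔ _ hmax
    _ ≤ M * (ψ a + ψ b) := by
        rw [hψ.map_max ha hb]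
        exact mul_le_mul_of_nonneg_left (max_le_add_of_nonneg (hψ0 ha) (hψ0 hb)) hM

end Doubling

noncomputable def geomMean (θ a b : ℝ) : ℝ := a ^ (1 - θ) * b ^ θ

section GeomMean

variable {θ a b a' b' : ℝ}

theorem geomMean_nonneg (ha : 0 ≤ a) (hb : 0 ≤ b) : 0 ≤ geomMean θ a b :=
  mul_nonneg (Real.rpow_nonneg ha _) (Real.rpow_nonneg hb _)

theorem geomMean_le_geomMean (hθ : θ ∈ Icc 0 1) (ha : 0 ≤ a) (haa' : a ≤ a') (hb : 0 ≤ b)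
    (hbb' : b ≤ b') : geomMean θ a b ≤ geomMean θ a' b' :=
  mul_le_mul (Real.rpow_le_rpow ha haa' (sub_nonneg.2 hθ.2)) (Real.rpow_le_rpow hb hbb' hθ.1)
    (Real.rpow_nonneg hb _) (Real.rpow_nonneg (ha.trans haa') _)

theorem geomMean_mul_mul {c : ℝ} (hc : 0 ≤ c) (ha : 0 ≤ a) (hb : 0 ≤ b) :
    geomMean θ (c * a) (c * b) = c * geomMean θ a b := by
  have hcc : c ^ (1 - θ) * c ^ θ = c := by
    rw [← Real.rpow_add' hc (by norm_num), sub_add_cancel, Real.rpow_one]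
  rw [geomMean, geomMean, Real.mul_rpow hc ha, Real.mul_rpow hc hb]
  linear_combination (a ^ (1 - θ) * b ^ θ) * hcc

theorem pos_of_geomMean_pos (hθ : θ ∈ Ioo 0 1) (ha : 0 ≤ a) (hb : 0 ≤ b)
    (h : 0 < geomMean θ a b) : 0 < a ∧ 0 < b := by
  refine ⟨ha.lt_of_ne ?_, hb.lt_of_ne ?_⟩ <;> rintro rfl <;>
    simp [geomMean, Real.zero_rpow, hθ.1.ne', (sub_pos.2 hθ.2).ne'] at h

/-- Hölder's inequality for two terms, with exponents `(1 - θ)⁻¹` and `θ⁻¹`. -/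
theorem geomMean_add_le (hθ : θ ∈ Ioo 0 1) {a₀ a₁ b₀ b₁ : ℝ} (ha₀ : 0 ≤ a₀) (ha₁ : 0 ≤ a₁)
    (hb₀ : 0 ≤ b₀) (hb₁ : 0 ≤ b₁) :
    geomMean θ a₀ a₁ + geomMean θ b₀ b₁ ≤ geomMean θ (a₀ + b₀) (a₁ + b₁) := by
  have h1θ : 1 - θ ≠ 0 := (sub_pos.2 hθ.2).ne'
  have holder := Real.inner_le_Lp_mul_Lq_of_nonneg Finset.univ
    (f := ![a₀ ^ (1 - θ), b₀ ^ (1 - θ)]) (g := ![a₁ ^ θ, b₁ ^ θ])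
    (Real.HolderConjugate.one_sub_inv_inv hθ.1 hθ.2)
    (by intro i _; fin_cases i <;> simp [Real.rpow_nonneg, *])
    (by intro i _; fin_cases i <;> simp [Real.rpow_nonneg, *])
  simpa [Fin.sum_univ_two, geomMean, Real.rpow_rpow_inv, ha₀, hb₀, ha₁, hb₁, h1θ,
    hθ.1.ne'] using holder

end GeomMean

section GeomMeanOfFunctions

variable {θ : ℝ}

theorem MonotoneOn.geomMean {α : Type*} [Preorder α] {s : Set α} {f₀ f₁ : α → ℝ}
    (hθ : θ ∈ Icc 0 1) (hf₀ : MonotoneOn f₀ s) (hf₁ : MonotoneOn f₁ s)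
    (h₀ : MapsTo f₀ s (Ici 0)) (h₁ : MapsTo f₁ s (Ici 0)) :
    MonotoneOn (fun x => geomMean θ (f₀ x) (f₁ x)) s :=
  fun _ hx _ hy hxy => geomMean_le_geomMean hθ (h₀ hx) (hf₀ hx hy hxy) (h₁ hx) (hf₁ hx hy hxy)

theorem ConcaveOn.geomMean {E : Type*} [AddCommGroup E] [Module ℝ E] {s : Set E}
    {f₀ f₁ : E → ℝ} (hθ : θ ∈ Ioo 0 1) (hf₀ : ConcaveOn ℝ s f₀) (hf₁ : ConcaveOn ℝ s f₁)
    (h₀ : MapsTo f₀ s (Ici 0)) (h₁ : MapsTo f₁ s (Ici 0)) :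
    ConcaveOn ℝ s (fun x => geomMean θ (f₀ x) (f₁ x)) := by
  refine ⟨hf₀.1, fun u hu v hv a b ha hb hab => ?_⟩
  have hu₀ : 0 ≤ f₀ u := h₀ hu
  have hu₁ : 0 ≤ f₁ u := h₁ hu
  have hv₀ : 0 ≤ f₀ v := h₀ hv
  have hv₁ : 0 ≤ f₁ v := h₁ hv
  calc a • _root_.geomMean θ (f₀ u) (f₁ u) + b • _root_.geomMean θ (f₀ v) (f₁ v)
      = _root_.geomMean θ (a * f₀ u) (a * f₁ u) + _root_.geomMean θ (b * f₀ v) (b * f₁ v) := by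
        rw [geomMean_mul_mul ha hu₀ hu₁, geomMean_mul_mul hb hv₀ hv₁, smul_eq_mul, smul_eq_mul]
    _ ≤ _root_.geomMean θ (a * f₀ u + b * f₀ v) (a * f₁ u + b * f₁ v) :=
        geomMean_add_le hθ (by positivity) (by positivity) (by positivity) (by positivity)
    _ ≤ _root_.geomMean θ (f₀ (a • u + b • v)) (f₁ (a • u + b • v)) :=
        geomMean_le_geomMean (Ioo_subset_Icc_self hθ) (by positivity) (hf₀.2 hu hv ha hb hab)
          (by positivity) (hf₁.2 hu hv ha hb hab)

theorem two_mul_geomMean_le {f₀ f₁ : ℝ → ℝ} {M₀ M₁ r : ℝ} (hθ : θ ∈ Icc 0 1)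
    (hf₀ : MonotoneOn f₀ (Ici 0)) (hf₁ : MonotoneOn f₁ (Ici 0))
    (h₀ : MapsTo f₀ (Ici 0) (Ici 0)) (h₁ : MapsTo f₁ (Ici 0) (Ici 0))
    (hM₀ : 0 ≤ M₀) (hM₁ : 0 ≤ M₁) (hΔ₀ : ∀ r, 0 ≤ r → 2 * f₀ r ≤ f₀ (M₀ * r))
    (hΔ₁ : ∀ r, 0 ≤ r → 2 * f₁ r ≤ f₁ (M₁ * r)) (hr : 0 ≤ r) :
    2 * geomMean θ (f₀ r) (f₁ r) ≤ geomMean θ (f₀ (max M₀ M₁ * r)) (f₁ (max M₀ M₁ * r)) := by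
  have hmax : ∀ {f : ℝ → ℝ} {M : ℝ}, MonotoneOn f (Ici 0) → 0 ≤ M → M ≤ max M₀ M₁ →
      f (M * r) ≤ f (max M₀ M₁ * r) := fun hf hM hle =>
    hf (mem_Ici.2 (by positivity)) (mem_Ici.2 (by positivity))
      (mul_le_mul_of_nonneg_right hle hr)
  rw [← geomMean_mul_mul zero_le_two (h₀ hr) (h₁ hr)]
  exact geomMean_le_geomMean hθ (by simpa using h₀ hr)
    ((hΔ₀ r hr).trans (hmax hf₀ hM₀ (le_max_left _ _))) (by simpa using h₁ hr)
    ((hΔ₁ r hr).trans (hmax hf₁ hM₁ (le_max_right _ _)))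

end GeomMeanOfFunctions

theorem norm_csgn_le (x : ℂ) : ‖csgn x‖ ≤ 1 := by
  unfold csgn
  split_ifs with hx
  · simp
  · rw [norm_div, Complex.norm_real, norm_norm, div_self (norm_ne_zero_iff.2 hx)]

theorem norm_mul_csgn (x : ℂ) : (‖x‖ : ℂ) * csgn x = x := by
  unfold csgn
  split_ifs with hx
  · simp [hx]
  · exact mul_div_cancel₀ x (by exact_mod_cast norm_ne_zero_iff.2 hx)

/-- The paper's `g_x`. -/
noncomputable def geomPath (A B : ℂ → ℝ) (x z : ℂ) : ℂ :=
  (A x : ℂ) ^ (1 - z) * (B x : ℂ) ^ z * csgn x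

section GeomPath

variable {A B : ℂ → ℝ} {x z : ℂ}

theorem geomPath_zero (z : ℂ) : geomPath A B 0 z = 0 := by
  simp [geomPath, csgn]

theorem differentiable_geomPath (hx : x ≠ 0 → 0 < A x ∧ 0 < B x) :
    Differentiable ℂ (geomPath A B x) := by
  rcases eq_or_ne x 0 with rfl | hx0
  · rw [show geomPath A B 0 = fun _ => 0 from funext geomPath_zero]
    exact differentiable_const 0
  obtain ⟨hA, hB⟩ := hx hx0
  intro z
  exact ((differentiableAt_id.const_sub 1).const_cpow (Or.inl (by exact_mod_cast hA.ne'))).mul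
    (differentiableAt_id.const_cpow (Or.inl (by exact_mod_cast hB.ne'))) |>.mul_const _

theorem norm_geomPath (hx : x ≠ 0 → 0 < A x ∧ 0 < B x) (z : ℂ) :
    ‖geomPath A B x z‖ = geomMean z.re (A x) (B x) * ‖csgn x‖ := by
  rcases eq_or_ne x 0 with rfl | hx0
  · simp [geomPath_zero, csgn]
  obtain ⟨hA, hB⟩ := hx hx0
  simp [geomPath, geomMean, Complex.norm_cpow_eq_rpow_re_of_pos hA,
    Complex.norm_cpow_eq_rpow_re_of_pos hB]

theorem geomPath_apply_ofReal {θ : ℝ} (hA : 0 ≤ A x) (hB : 0 ≤ B x)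
    (h : geomMean θ (A x) (B x) = ‖x‖) : geomPath A B x θ = x := by
  have hθ : (A x : ℂ) ^ (1 - (θ : ℂ)) * (B x : ℂ) ^ (θ : ℂ) = (‖x‖ : ℂ) := by
    rw [← h, geomMean, Complex.ofReal_mul, Complex.ofReal_cpow hA, Complex.ofReal_cpow hB,
      Complex.ofReal_sub, Complex.ofReal_one]
  rw [geomPath, hθ, norm_mul_csgn]

theorem norm_geomPath_le_of_re_eq_zero (hx : x ≠ 0 → 0 < A x ∧ 0 < B x) (hA : 0 ≤ A x)
    (hz : z.re = 0) : ‖geomPath A B x z‖ ≤ A x := by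
  rw [norm_geomPath hx, hz]
  simpa [geomMean] using mul_le_of_le_one_right hA (norm_csgn_le x)

theorem norm_geomPath_le_of_re_eq_one (hx : x ≠ 0 → 0 < A x ∧ 0 < B x) (hB : 0 ≤ B x)
    (hz : z.re = 1) : ‖geomPath A B x z‖ ≤ B x := by
  rw [norm_geomPath hx, hz]
  simpa [geomMean] using mul_le_of_le_one_right hB (norm_csgn_le x)

theorem norm_geomPath_le_add (hx : x ≠ 0 → 0 < A x ∧ 0 < B x) (hA : 0 ≤ A x) (hB : 0 ≤ B x)
    (hz : z.re ∈ Icc 0 1) : ‖geomPath A B x z‖ ≤ A x + B x := by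
  rw [norm_geomPath hx]
  calc geomMean z.re (A x) (B x) * ‖csgn x‖ ≤ geomMean z.re (A x) (B x) :=
        mul_le_of_le_one_right (geomMean_nonneg hA hB) (norm_csgn_le x)
    _ ≤ (1 - z.re) * A x + z.re * B x := Real.geom_mean_le_arith_mean2_weighted
        (sub_nonneg.2 hz.2) hz.1 hA hB (sub_add_cancel 1 z.re)
    _ ≤ A x + B x := by nlinarith [hz.1, hz.2]

end GeomPath

section ThreeLines

variable {E : Type*} [NormedAddCommGroup E] [NormedSpace ℂ E] [CompleteSpace E] {f : ℂ → E}

theorem Differentiable.dslope (hf : Differentiable ℂ f) (c : ℂ) :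
    Differentiable ℂ (dslope f c) := fun w =>
  ((Complex.differentiableOn_dslope Filter.univ_mem).2 hf.differentiableOn w
    (mem_univ w)).differentiableAt Filter.univ_mem

theorem bddAbove_norm_dslope_image {c : ℂ} {S : Set ℂ} (hf : Differentiable ℂ f)
    (hS : BddAbove ((norm ∘ f) '' S)) : BddAbove ((norm ∘ dslope f c) '' S) := by
  obtain ⟨C, hC⟩ := hS
  obtain ⟨K, hK⟩ := (isCompact_closedBall c 1).exists_bound_of_continuousOn
    (hf.dslope c).continuous.continuousOn
  refine ⟨max K (C + ‖f c‖), ?_⟩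
  rintro _ ⟨w, hw, rfl⟩
  by_cases hwc : w ∈ Metric.closedBall c 1
  · exact le_max_of_le_left (hK w hwc)
  have hdist : 1 ≤ ‖w - c‖ := by
    rw [Metric.mem_closedBall, not_le, dist_eq_norm] at hwc
    exact hwc.le
  have hne : w ≠ c := by rintro rfl; simp at hwc
  refine le_max_of_le_right ?_
  calc ‖dslope f c w‖ = ‖w - c‖⁻¹ * ‖f w - f c‖ := by
        rw [dslope_of_ne _ hne, slope_def_module, norm_smul, norm_inv]
    _ ≤ 1 * (‖f w‖ + ‖f c‖) := mul_le_mul (inv_le_one_of_one_le₀ hdist) (norm_sub_le _ _)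
        (norm_nonneg _) zero_le_one
    _ ≤ C + ‖f c‖ := by rw [one_mul]; gcongr; exact hC ⟨w, hw, rfl⟩

/-- Three lines theorem for `f(z)/(z - θ)`: on the line `re z = 0` (resp. `re z = 1`) the
denominator has modulus at least `θ` (resp. `1 - θ`). -/
theorem norm_deriv_le_of_three_lines {θ a b : ℝ} (hθ : θ ∈ Ioo 0 1) (hf : Differentiable ℂ f)
    (hbdd : BddAbove ((norm ∘ f) '' HadamardThreeLines.verticalClosedStrip 0 1))
    (hfθ : f θ = 0) (ha : ∀ z ∈ re ⁻¹' {0}, ‖f z‖ ≤ a) (hb : ∀ z ∈ re ⁻¹' {1}, ‖f z‖ ≤ b) :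
    ‖deriv f θ‖ ≤ geomMean θ (a / θ) (b / (1 - θ)) := by
  obtain ⟨hθ0, hθ1⟩ := hθ
  have hquot : ∀ {r c : ℝ}, (∀ z ∈ re ⁻¹' {r}, ‖f z‖ ≤ c) → 0 < |r - θ| →
      ∀ z ∈ re ⁻¹' {r}, ‖dslope f θ z‖ ≤ c / |r - θ| := by
    intro r c hc hr z hz
    have hz' : z.re = r := hz
    have hle : |r - θ| ≤ ‖z - θ‖ := by simpa [hz'] using Complex.abs_re_le_norm (z - θ)
    have hne : z ≠ θ := by rintro rfl; simp at hz'; simp [hz'] at hr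
    rw [dslope_of_ne _ hne, slope_def_module, hfθ, sub_zero, norm_smul, norm_inv,
      inv_mul_eq_div]
    exact div_le_div₀ ((norm_nonneg _).trans (hc z hz)) (hc z hz) hr hle
  have h := HadamardThreeLines.norm_le_interp_of_mem_verticalClosedStrip₀₁' (dslope f θ)
    (z := θ) ⟨by simpa using hθ0.le, by simpa using hθ1.le⟩ (hf.dslope θ).diffContOnCl
    (bddAbove_norm_dslope_image hf hbdd)
    (hquot ha (by simpa [abs_of_pos hθ0] using hθ0))
    (hquot hb (by rw [abs_of_pos (sub_pos.2 hθ1)]; linarith))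
  rw [dslope_same] at h
  simpa [geomMean, abs_of_pos hθ0, abs_of_pos (sub_pos.2 hθ1)] using h

end ThreeLines

theorem norm_smul_add_smul_sub_le {E : Type*} [SeminormedAddCommGroup E] [NormedSpace ℝ E]
    {t : ℝ} (ht : t ∈ Icc 0 1) (u v w : E) :
    ‖t • u + (1 - t) • v - w‖ ≤ t * ‖u‖ + (1 - t) * ‖v‖ + ‖w‖ := by
  calc ‖t • u + (1 - t) • v - w‖ ≤ ‖t • u‖ + ‖(1 - t) • v‖ + ‖w‖ :=
        (norm_sub_le _ _).trans (add_le_add_left (norm_add_le _ _) _)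
    _ = t * ‖u‖ + (1 - t) * ‖v‖ + ‖w‖ := by
        rw [norm_smul, norm_smul, Real.norm_of_nonneg ht.1,
          Real.norm_of_nonneg (sub_nonneg.2 ht.2)]

theorem norm_deriv_geomPath_sub_le {A B : ℂ → ℝ} {θ t : ℝ} (hθ : θ ∈ Ioo 0 1)
    (ht : t ∈ Icc 0 1) (hA : ∀ x, 0 ≤ A x) (hB : ∀ x, 0 ≤ B x)
    (hAB : ∀ x, geomMean θ (A x) (B x) = ‖x‖) (x y : ℂ) :
    ‖t • deriv (geomPath A B x) θ + (1 - t) • deriv (geomPath A B y) θ -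
        deriv (geomPath A B (t • x + (1 - t) • y)) θ‖ ≤
      geomMean θ ((t * A x + (1 - t) * A y + A (t • x + (1 - t) • y)) / θ)
        ((t * B x + (1 - t) * B y + B (t • x + (1 - t) • y)) / (1 - θ)) := by
  set z := t • x + (1 - t) • y
  have hpos : ∀ w, w ≠ 0 → 0 < A w ∧ 0 < B w := fun w hw =>
    pos_of_geomMean_pos hθ (hA w) (hB w) (by rw [hAB]; exact norm_pos_iff.2 hw)
  have hdiff : ∀ w, Differentiable ℂ (geomPath A B w) := fun w =>
    differentiable_geomPath (hpos w)
  set N : ℂ → ℂ := fun w => t • geomPath A B x w + (1 - t) • geomPath A B y w - geomPath A B z w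
  have hN : Differentiable ℂ N :=
    (((hdiff x).const_smul t).add ((hdiff y).const_smul (1 - t))).sub (hdiff z)
  have hderiv : deriv N θ = t • deriv (geomPath A B x) θ + (1 - t) • deriv (geomPath A B y) θ -
      deriv (geomPath A B z) θ :=
    ((((hdiff x _).hasDerivAt.const_smul t).add
      ((hdiff y _).hasDerivAt.const_smul (1 - t))).sub (hdiff z _).hasDerivAt).deriv
  have hbound : ∀ w, ‖N w‖ ≤
      t * ‖geomPath A B x w‖ + (1 - t) * ‖geomPath A B y w‖ + ‖geomPath A B z w‖ :=
    fun w => norm_smul_add_smul_sub_le ht _ _ _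
  obtain ⟨ht0, ht1⟩ := ht
  have ht' : 0 ≤ 1 - t := sub_nonneg.2 ht1
  rw [← hderiv]
  refine norm_deriv_le_of_three_lines hθ hN
    ⟨t * (A x + B x) + (1 - t) * (A y + B y) + (A z + B z), ?_⟩ ?_
    (fun w hw => (hbound w).trans ?_) (fun w hw => (hbound w).trans ?_)
  · rintro _ ⟨w, hw, rfl⟩
    refine (hbound w).trans ?_
    gcongr <;> exact norm_geomPath_le_add (hpos _) (hA _) (hB _) hw
  · simp only [N, geomPath_apply_ofReal (hA _) (hB _) (hAB _), z, sub_self]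
  · gcongr <;> exact norm_geomPath_le_of_re_eq_zero (hpos _) (hA _) hw
  · gcongr <;> exact norm_geomPath_le_of_re_eq_one (hpos _) (hB _) hw

theorem ConcaveOn.add_le_two_mul {f : ℝ → ℝ} (hconc : ConcaveOn ℝ (Ici 0) f)
    (hmono : MonotoneOn f (Ici 0)) {t u v w : ℝ} (ht : t ∈ Icc 0 1) (hu : 0 ≤ u) (hv : 0 ≤ v)
    (hw : 0 ≤ w) (hwuv : w ≤ t * u + (1 - t) * v) :
    t * f u + (1 - t) * f v + f w ≤ 2 * f (t * u + (1 - t) * v) := by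
  have hmid := hconc.2 hu hv ht.1 (sub_nonneg.2 ht.2) (add_sub_cancel t 1)
  simp only [smul_eq_mul] at hmid
  have hmem : t * u + (1 - t) * v ∈ Ici 0 :=
    add_nonneg (mul_nonneg ht.1 hu) (mul_nonneg (sub_nonneg.2 ht.2) hv)
  linarith [hmono hw hmem hwuv]

theorem geomMean_div_le {θ S₀ S₁ a b : ℝ} (hθ : θ ∈ Ioo 0 1) (hS₀ : 0 ≤ S₀) (hS₁ : 0 ≤ S₁)
    (h₀ : S₀ ≤ 2 * a) (h₁ : S₁ ≤ 2 * b) :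
    geomMean θ (S₀ / θ) (S₁ / (1 - θ)) ≤ 2 / min θ (1 - θ) * geomMean θ a b := by
  have hδ : 0 < min θ (1 - θ) := lt_min hθ.1 (sub_pos.2 hθ.2)
  have hdiv : ∀ {S c r : ℝ}, 0 ≤ S → S ≤ 2 * r → min θ (1 - θ) ≤ c →
      S / c ≤ 2 / min θ (1 - θ) * r :=
    fun hS hSr hc => calc _ ≤ _ / min θ (1 - θ) := div_le_div_of_nonneg_left hS hδ hc
      _ ≤ 2 * _ / min θ (1 - θ) := div_le_div_of_nonneg_right hSr hδ.le
      _ = _ := by ring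
  rw [← geomMean_mul_mul (by positivity) (by linarith) (by linarith)]
  exact geomMean_le_geomMean (Ioo_subset_Icc_self hθ) (div_nonneg hS₀ hθ.1.le)
    (hdiv hS₀ h₀ (min_le_left _ _)) (div_nonneg hS₁ (sub_pos.2 hθ.2).le)
    (hdiv hS₁ h₁ (min_le_right _ _))

/-- The paper's `Ω x = g_x'(θ)`. -/
noncomputable def interpDerivation (φ₀inv φ₁inv φθ : ℝ → ℝ) (θ : ℝ) (x : ℂ) : ℂ :=
  deriv (geomPath (fun w => φ₀inv (φθ ‖w‖)) (fun w => φ₁inv (φθ ‖w‖)) x) θ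

theorem exists_derivation_defect_le {θ M : ℝ} {φ₀inv φ₁inv φθ : ℝ → ℝ} (hθ : θ ∈ Ioo 0 1)
    (hmono₀ : MonotoneOn φ₀inv (Ici 0)) (hmono₁ : MonotoneOn φ₁inv (Ici 0))
    (hmaps₀ : MapsTo φ₀inv (Ici 0) (Ici 0)) (hmaps₁ : MapsTo φ₁inv (Ici 0) (Ici 0))
    (hconc₀ : ConcaveOn ℝ (Ici 0) φ₀inv) (hconc₁ : ConcaveOn ℝ (Ici 0) φ₁inv)
    (hpair : IsIncreasingInvPair (fun s => geomMean θ (φ₀inv s) (φ₁inv s)) φθ)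
    (hconv : ConvexOn ℝ (Ici 0) φθ) (hM : 0 < M) (hΔ : ∀ s, 0 ≤ s → φθ (2 * s) ≤ M * φθ s) :
    ∃ β > 0, ∀ x y : ℂ, ∀ t ∈ Icc (0 : ℝ) 1,
      φθ ‖t • interpDerivation φ₀inv φ₁inv φθ θ x + (1 - t) • interpDerivation φ₀inv φ₁inv φθ θ y -
          interpDerivation φ₀inv φ₁inv φθ θ (t • x + (1 - t) • y)‖ ≤
        β * (t * φθ ‖x‖ + (1 - t) * φθ ‖y‖) := by
  have hδ : 0 < min θ (1 - θ) := lt_min hθ.1 (sub_pos.2 hθ.2)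
  obtain ⟨β, hβ, hφθβ⟩ := exists_le_mul_of_doubling hpair.monotoneOn_inv hM hΔ
    (c := 2 / min θ (1 - θ)) (by positivity)
  refine ⟨β, hβ, fun x y t ht => ?_⟩
  obtain ⟨ht0, ht1⟩ := ht
  have ht' : 0 ≤ 1 - t := sub_nonneg.2 ht1
  set z := t • x + (1 - t) • y
  set s := t * φθ ‖x‖ + (1 - t) * φθ ‖y‖
  have hφθ : ∀ w : ℂ, 0 ≤ φθ ‖w‖ := fun w => hpair.mapsTo_inv (norm_nonneg w)
  have hs : 0 ≤ s := add_nonneg (mul_nonneg ht0 (hφθ x)) (mul_nonneg ht' (hφθ y))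
  have hz : φθ ‖z‖ ≤ s := by
    simpa only [smul_eq_mul] using (hconv.comp_norm hpair.monotoneOn_inv).2 (mem_univ x)
      (mem_univ y) ht0 ht' (add_sub_cancel t 1)
  have hsum : ∀ {f : ℝ → ℝ}, MonotoneOn f (Ici 0) → MapsTo f (Ici 0) (Ici 0) →
      ConcaveOn ℝ (Ici 0) f → 0 ≤ t * f (φθ ‖x‖) + (1 - t) * f (φθ ‖y‖) + f (φθ ‖z‖) ∧
        t * f (φθ ‖x‖) + (1 - t) * f (φθ ‖y‖) + f (φθ ‖z‖) ≤ 2 * f s :=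
    fun hmono hmaps hconc => ⟨add_nonneg (add_nonneg (mul_nonneg ht0 (hmaps (hφθ x)))
      (mul_nonneg ht' (hmaps (hφθ y)))) (hmaps (hφθ z)),
      hconc.add_le_two_mul hmono ⟨ht0, ht1⟩ (hφθ x) (hφθ y) (hφθ z) hz⟩
  obtain ⟨hS₀, hS₀le⟩ := hsum hmono₀ hmaps₀ hconc₀
  obtain ⟨hS₁, hS₁le⟩ := hsum hmono₁ hmaps₁ hconc₁
  have hdefect := norm_deriv_geomPath_sub_le hθ ⟨ht0, ht1⟩ (fun w => hmaps₀ (hφθ w))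
    (fun w => hmaps₁ (hφθ w)) (fun w => hpair.invOn.2 (norm_nonneg w)) x y
  have hρs : 0 ≤ geomMean θ (φ₀inv s) (φ₁inv s) := geomMean_nonneg (hmaps₀ hs) (hmaps₁ hs)
  calc _ ≤ φθ (2 / min θ (1 - θ) * geomMean θ (φ₀inv s) (φ₁inv s)) :=
        hpair.monotoneOn_inv (norm_nonneg _) (mem_Ici.2 (by positivity))
          (hdefect.trans (geomMean_div_le hθ hS₀ hS₁ hS₀le hS₁le))
    _ ≤ β * φθ (geomMean θ (φ₀inv s) (φ₁inv s)) := hφθβ _ hρs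
    _ = β * s := congrArg (β * ·) (hpair.invOn.1 hs)

theorem exists_quasiconvex_of_derivation_defect_le {E : Type*} [SeminormedAddCommGroup E]
    [NormedSpace ℝ E] {ψ : ℝ → ℝ} {Ω : E → E} {M β : ℝ} (hmono : MonotoneOn ψ (Ici 0))
    (hmaps : MapsTo ψ (Ici 0) (Ici 0)) (hconv : ConvexOn ℝ (Ici 0) ψ) (hM : 0 ≤ M)
    (hΔ : ∀ s, 0 ≤ s → ψ (2 * s) ≤ M * ψ s) (hβ : 0 ≤ β)
    (hΩ : ∀ x y : E, ∀ t ∈ Icc (0 : ℝ) 1,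
      ψ ‖t • Ω x + (1 - t) • Ω y - Ω (t • x + (1 - t) • y)‖ ≤
        β * (t * ψ ‖x‖ + (1 - t) * ψ ‖y‖)) :
    let Ψ : E × E → ℝ := fun p => ψ ‖p.2‖ + ψ ‖p.1 - Ω p.2‖
    ∃ C : ℝ, 0 < C ∧ ∀ p q : E × E, ∀ t ∈ Icc (0 : ℝ) 1,
      Ψ (t • p + (1 - t) • q) ≤ C * (t * Ψ p + (1 - t) * Ψ q) := by
  intro Ψ
  refine ⟨1 + M * β + M, by positivity, fun p q t ht => ?_⟩
  obtain ⟨ht0, ht1⟩ := ht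
  have ht' : 0 ≤ 1 - t := sub_nonneg.2 ht1
  have hmix : ∀ u v : E, ψ ‖t • u + (1 - t) • v‖ ≤ t * ψ ‖u‖ + (1 - t) * ψ ‖v‖ := fun u v => by
    simpa only [smul_eq_mul] using (hconv.comp_norm hmono).2 (mem_univ u) (mem_univ v) ht0 ht'
      (add_sub_cancel t 1)
  set D := t • (p.1 - Ω p.2) + (1 - t) • (q.1 - Ω q.2)
  set F := t • Ω p.2 + (1 - t) • Ω q.2 - Ω (t • p.2 + (1 - t) • q.2)
  have hsplit : (t • p + (1 - t) • q).1 - Ω (t • p + (1 - t) • q).2 = D + F := by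
    simp only [D, F, Prod.fst_add, Prod.snd_add, Prod.smul_fst, Prod.smul_snd, smul_sub]
    abel
  have hψ : ∀ u : E, 0 ≤ ψ ‖u‖ := fun u => hmaps (norm_nonneg u)
  have hDF : ψ ‖D + F‖ ≤ M * (ψ ‖D‖ + ψ ‖F‖) :=
    (hmono (norm_nonneg _) (mem_Ici.2 (by positivity)) (norm_add_le D F)).trans
      (le_mul_add_of_doubling hmono hmaps hM hΔ (norm_nonneg D) (norm_nonneg F))
  set a := t * ψ ‖p.2‖ + (1 - t) * ψ ‖q.2‖
  set b := t * ψ ‖p.1 - Ω p.2‖ + (1 - t) * ψ ‖q.1 - Ω q.2‖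
  have ha : 0 ≤ a := add_nonneg (mul_nonneg ht0 (hψ _)) (mul_nonneg ht' (hψ _))
  have hb : 0 ≤ b := add_nonneg (mul_nonneg ht0 (hψ _)) (mul_nonneg ht' (hψ _))
  calc Ψ (t • p + (1 - t) • q) = ψ ‖t • p.2 + (1 - t) • q.2‖ + ψ ‖D + F‖ := by
        rw [← hsplit]; rfl
    _ ≤ a + M * (b + β * a) := add_le_add (hmix p.2 q.2)
        (hDF.trans (mul_le_mul_of_nonneg_left
          (add_le_add (hmix (p.1 - Ω p.2) (q.1 - Ω q.2)) (hΩ p.2 q.2 t ⟨ht0, ht1⟩)) hM))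
    _ ≤ (1 + M * β + M) * (a + b) := by
        nlinarith [mul_nonneg (mul_nonneg hM hβ) hb, mul_nonneg hM ha]
    _ = (1 + M * β + M) * (t * Ψ p + (1 - t) * Ψ q) := by simp only [Ψ, a, b]; ring

theorem derivation_quasiconvexity_general
    (φ₀ φ₁ φ₀inv φ₁inv φθ : ℝ → ℝ) (θ : ℝ) (hθ : θ ∈ Set.Ioo (0:ℝ) 1)
    -- φ₀, φ₁ are nondegenerate Orlicz functions in Δ₂
    (hconv₀ : ConvexOn ℝ (Set.Ici 0) φ₀) (hzero₀ : φ₀ 0 = 0)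
    (hnonneg₀ : ∀ t, 0 ≤ t → 0 ≤ φ₀ t)
    (hΔ₂₀ : ∃ M > 0, ∀ t, 0 ≤ t → φ₀ (2 * t) ≤ M * φ₀ t)
    (hconv₁ : ConvexOn ℝ (Set.Ici 0) φ₁) (hzero₁ : φ₁ 0 = 0)
    (hnonneg₁ : ∀ t, 0 ≤ t → 0 ≤ φ₁ t)
    (hΔ₂₁ : ∃ M > 0, ∀ t, 0 ≤ t → φ₁ (2 * t) ≤ M * φ₁ t)
    -- φ₀inv, φ₁inv are the inverses of φ₀, φ₁ on [0,∞)
    (hinv_nonneg₀ : ∀ s, 0 ≤ s → 0 ≤ φ₀inv s)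
    (hleft₀ : ∀ t, 0 ≤ t → φ₀inv (φ₀ t) = t)
    (hright₀ : ∀ s, 0 ≤ s → φ₀ (φ₀inv s) = s)
    (hinv_nonneg₁ : ∀ s, 0 ≤ s → 0 ≤ φ₁inv s)
    (hleft₁ : ∀ t, 0 ≤ t → φ₁inv (φ₁ t) = t)
    (hright₁ : ∀ s, 0 ≤ s → φ₁ (φ₁inv s) = s)
    -- φθ is the Orlicz function with φθ⁻¹ = (φ₀⁻¹)^{1−θ} (φ₁⁻¹)^θ
    (hθnonneg : ∀ s, 0 ≤ s → 0 ≤ φθ s)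
    (hθleft : ∀ t, 0 ≤ t → φθ (φ₀inv t ^ (1 - θ) * φ₁inv t ^ θ) = t)
    (hθright : ∀ s, 0 ≤ s → φ₀inv (φθ s) ^ (1 - θ) * φ₁inv (φθ s) ^ θ = s)
    :
    let g : ℂ → ℂ → ℂ := fun x z =>
      ((φ₀inv (φθ (‖x‖)) : ℂ) ^ ((1 : ℂ) - z)) *
        ((φ₁inv (φθ (‖x‖)) : ℂ) ^ z) * csgn x
    let Ω : ℂ → ℂ := fun x => deriv (g x) θ
    let Ψ : ℂ × ℂ → ℝ := fun p =>
      φθ (‖p.2‖) + φθ (‖p.1 - Ω p.2‖)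
    (∃ α β : ℝ, 0 < α ∧ 0 < β ∧ ∀ x y : ℂ, ∀ t ∈ Set.Icc (0:ℝ) 1,
      φθ (‖t • Ω x + (1 - t) • Ω y - Ω (t • x + (1 - t) • y)‖) ≤
        β * (t * φθ (‖x‖) + (1 - t) * φθ (‖y‖))) ∧
    (∃ C : ℝ, 0 < C ∧ ∀ p q : ℂ × ℂ, ∀ t ∈ Set.Icc (0:ℝ) 1,
      Ψ (t • p + (1 - t) • q) ≤ C * (t * Ψ p + (1 - t) * Ψ q)) := by
  intro g Ω Ψ
  obtain ⟨M₀, hM₀, hΔ₀⟩ := hΔ₂₀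
  obtain ⟨M₁, hM₁, hΔ₁⟩ := hΔ₂₁
  have pair₀ : IsIncreasingInvPair φ₀ φ₀inv := ⟨hconv₀.monotoneOn_of_isMinOn
    (isMinOn_iff.2 fun t ht => by rw [hzero₀]; exact hnonneg₀ t ht), hnonneg₀, hinv_nonneg₀,
    hleft₀, hright₀⟩
  have pair₁ : IsIncreasingInvPair φ₁ φ₁inv := ⟨hconv₁.monotoneOn_of_isMinOn
    (isMinOn_iff.2 fun t ht => by rw [hzero₁]; exact hnonneg₁ t ht), hnonneg₁, hinv_nonneg₁,
    hleft₁, hright₁⟩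
  have pairθ : IsIncreasingInvPair (fun s => geomMean θ (φ₀inv s) (φ₁inv s)) φθ :=
    ⟨pair₀.monotoneOn_inv.geomMean (Ioo_subset_Icc_self hθ) pair₁.monotoneOn_inv hinv_nonneg₀
      hinv_nonneg₁, fun s hs => geomMean_nonneg (hinv_nonneg₀ s hs) (hinv_nonneg₁ s hs),
      hθnonneg, hθleft, hθright⟩
  have hconc₀ := pair₀.concaveOn_inv hconv₀
  have hconc₁ := pair₁.concaveOn_inv hconv₁
  have hconvθ := pairθ.convexOn_inv (hconc₀.geomMean hθ hconc₁ hinv_nonneg₀ hinv_nonneg₁)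
  have hΔθ : ∀ s, 0 ≤ s → φθ (2 * s) ≤ max M₀ M₁ * φθ s := fun s =>
    pairθ.inv_two_mul_le_mul_inv (by positivity) fun r => two_mul_geomMean_le
      (Ioo_subset_Icc_self hθ) pair₀.monotoneOn_inv pair₁.monotoneOn_inv hinv_nonneg₀
      hinv_nonneg₁ hM₀.le hM₁.le (fun _ => pair₀.two_mul_inv_le_inv_mul hM₀.le hΔ₀)
      (fun _ => pair₁.two_mul_inv_le_inv_mul hM₁.le hΔ₁)
  obtain ⟨β, hβ, hdefect⟩ := exists_derivation_defect_le hθ pair₀.monotoneOn_inv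
    pair₁.monotoneOn_inv hinv_nonneg₀ hinv_nonneg₁ hconc₀ hconc₁ pairθ hconvθ
    (lt_max_of_lt_left hM₀) hΔθ
  exact ⟨⟨1, β, one_pos, hβ, hdefect⟩, exists_quasiconvex_of_derivation_defect_le
    pairθ.monotoneOn_inv hθnonneg hconvθ (le_max_of_le_left hM₀.le) hΔθ hβ.le hdefect⟩

/-- quasi-convexity estimate for the derivation `x ↦ g_x'(θ)` and
quasi-convexity of `(x₁,x₀) ↦ φ_θ(x₀) + φ_θ(x₁ − g_{x₀}'(θ))`. -/
theorem derivation_quasiconvexity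
    (φ₀ φ₁ φ₀inv φ₁inv φθ : ℝ → ℝ) (θ : ℝ) (hθ : θ ∈ Set.Ioo (0:ℝ) 1)
    -- φ₀, φ₁ are nondegenerate Orlicz functions in Δ₂
    (hconv₀ : ConvexOn ℝ (Set.Ici 0) φ₀) (hzero₀ : φ₀ 0 = 0)
    (hnonneg₀ : ∀ t, 0 ≤ t → 0 ≤ φ₀ t)
    (htop₀ : Filter.Tendsto φ₀ Filter.atTop Filter.atTop)
    (hnondeg₀ : ∀ t, 0 < t → 0 < φ₀ t)
    (hΔ₂₀ : ∃ M > 0, ∀ t, 0 ≤ t → φ₀ (2 * t) ≤ M * φ₀ t)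
    (hconv₁ : ConvexOn ℝ (Set.Ici 0) φ₁) (hzero₁ : φ₁ 0 = 0)
    (hnonneg₁ : ∀ t, 0 ≤ t → 0 ≤ φ₁ t)
    (htop₁ : Filter.Tendsto φ₁ Filter.atTop Filter.atTop)
    (hnondeg₁ : ∀ t, 0 < t → 0 < φ₁ t)
    (hΔ₂₁ : ∃ M > 0, ∀ t, 0 ≤ t → φ₁ (2 * t) ≤ M * φ₁ t)
    -- φ₀inv, φ₁inv are the inverses of φ₀, φ₁ on [0,∞)
    (hinv_nonneg₀ : ∀ s, 0 ≤ s → 0 ≤ φ₀inv s)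
    (hleft₀ : ∀ t, 0 ≤ t → φ₀inv (φ₀ t) = t)
    (hright₀ : ∀ s, 0 ≤ s → φ₀ (φ₀inv s) = s)
    (hinv_nonneg₁ : ∀ s, 0 ≤ s → 0 ≤ φ₁inv s)
    (hleft₁ : ∀ t, 0 ≤ t → φ₁inv (φ₁ t) = t)
    (hright₁ : ∀ s, 0 ≤ s → φ₁ (φ₁inv s) = s)
    -- φθ is the Orlicz function with φθ⁻¹ = (φ₀⁻¹)^{1−θ} (φ₁⁻¹)^θ
    (hθnonneg : ∀ s, 0 ≤ s → 0 ≤ φθ s)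
    (hθleft : ∀ t, 0 ≤ t → φθ (φ₀inv t ^ (1 - θ) * φ₁inv t ^ θ) = t)
    (hθright : ∀ s, 0 ≤ s → φ₀inv (φθ s) ^ (1 - θ) * φ₁inv (φθ s) ^ θ = s)
    :
    let g : ℂ → ℂ → ℂ := fun x z =>
      ((φ₀inv (φθ (‖x‖)) : ℂ) ^ ((1 : ℂ) - z)) *
        ((φ₁inv (φθ (‖x‖)) : ℂ) ^ z) * csgn x
    let Ω : ℂ → ℂ := fun x => deriv (g x) θ
    let Ψ : ℂ × ℂ → ℝ := fun p =>
      φθ (‖p.2‖) + φθ (‖p.1 - Ω p.2‖)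
    (∃ α β : ℝ, 0 < α ∧ 0 < β ∧ ∀ x y : ℂ, ∀ t ∈ Set.Icc (0:ℝ) 1,
      φθ (‖t • Ω x + (1 - t) • Ω y - Ω (t • x + (1 - t) • y)‖) ≤
        β * (t * φθ (‖x‖) + (1 - t) * φθ (‖y‖))) ∧
    (∃ C : ℝ, 0 < C ∧ ∀ p q : ℂ × ℂ, ∀ t ∈ Set.Icc (0:ℝ) 1,
      Ψ (t • p + (1 - t) • q) ≤ C * (t * Ψ p + (1 - t) * Ψ q)) :=
  derivation_quasiconvexity_general φ₀ φ₁ φ₀inv φ₁inv φθ θ hθ hconv₀ hzero₀ hnonneg₀ hΔ₂₀ hconv₁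
    hzero₁ hnonneg₁ hΔ₂₁ hinv_nonneg₀ hleft₀ hright₀ hinv_nonneg₁ hleft₁ hright₁ hθnonneg hθleft
    hθright
end
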